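/- The iterates of f satisfy: f^N(z) = 2^{-(N+m)} h^N(2^m z) for all N ≥ 1, whenever Im z ∈ (2^{-(m+1)}, 2^{-m}] for some m ∈ ℤ. -/
import Mathlib


open Set Complex Filter

/-- The slice function `h_y`. -/
noncomputable def hy (y x : ℝ) : ℝ :=
  if |x| + |y - 3/4| < 1/4 then 1
  else if y ≤ |x| then 4
  else if y ≤ 3/4 then 6 * |x| - 6 * y + 4
  else (3 * |x| + 5 * y - 4) / (2 * y - 1)

/-- The map `h(x + iy) = h_y(x)·x + iy`. -/
noncomputable def hmap (z : ℂ) : ℂ := ⟨hy z.im z.re * z.re, z.im⟩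

/-- For `y > 0`, the unique integer `m` with `2^{-(m+1)} < y ≤ 2^{-m}`. -/
noncomputable def mval (y : ℝ) : ℤ := ⌊Real.logb 2 y⁻¹⌋

/-- The map `f`: equal to `2^{-(m+1)} h(2^m z)` when `Im z ∈ (2^{-(m+1)}, 2^{-m}]`,
and to `2x + iy/2` when `Im z ≤ 0`. -/
noncomputable def f (z : ℂ) : ℂ :=
  if z.im ≤ 0 then ⟨2 * z.re, z.im / 2⟩
  else (2 : ℂ) ^ (-(mval z.im + 1)) * hmap ((2 : ℂ) ^ (mval z.im) * z)

lemma im_mul2 (k : ℤ) (w : ℂ) : ((2:ℂ)^k * w).im = (2:ℝ)^k * w.im := by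
  have h : (2:ℂ)^k = (((2:ℝ)^k : ℝ) : ℂ) := by rw [Complex.ofReal_zpow]; norm_num
  rw [h, Complex.im_ofReal_mul]

lemma logb2 (m : ℤ) : Real.logb 2 ((2:ℝ)^m) = m := by
  rw [show ((2:ℝ)^m) = (2:ℝ)^(m:ℝ) by rw [Real.rpow_intCast]]
  exact Real.logb_rpow (by norm_num) (by norm_num)

lemma mval_eq (m : ℤ) (y : ℝ) (h1 : (2:ℝ)^(-(m+1)) < y) (h2 : y ≤ (2:ℝ)^(-m)) :
    mval y = m := by
  have hy0 : 0 < y := lt_trans (by positivity) h1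
  unfold mval
  rw [Int.floor_eq_iff]
  constructor
  · calc (m:ℝ) = Real.logb 2 ((2:ℝ)^m) := (logb2 m).symm
    _ ≤ Real.logb 2 y⁻¹ := by
        apply (Real.logb_le_logb one_lt_two (by positivity) (by positivity)).2
        rw [le_inv_comm₀ (by positivity) hy0, ← zpow_neg]
        exact h2
  · have : Real.logb 2 y⁻¹ < Real.logb 2 ((2:ℝ)^(m+1)) := by
      apply Real.logb_lt_logb one_lt_two (by positivity)
      rw [inv_lt_comm₀ hy0 (by positivity), ← zpow_neg]
      exact h1
    rw [logb2] at this
    simpa using this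

lemma hmap_im (w : ℂ) : (hmap w).im = w.im := rfl

lemma hmap_iter_im (n : ℕ) (w : ℂ) : (hmap^[n] w).im = w.im := by
  induction n with
  | zero => rfl
  | succ k ih => rw [Function.iterate_succ_apply', hmap_im, ih]

theorem stmt9 (m : ℤ) (z : ℂ)
    (hz : z.im ∈ Ioc ((2:ℝ) ^ (-(m+1))) ((2:ℝ) ^ (-m))) :
    ∀ N : ℕ, 1 ≤ N →
      f^[N] z = (2 : ℂ) ^ (-((N : ℤ) + m)) * hmap^[N] ((2 : ℂ) ^ m * z) := by
  have him0 : 0 < z.im := lt_trans (by positivity) hz.1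
  intro N
  induction N with
  | zero => omega
  | succ n ih =>
    intro _
    rcases Nat.eq_zero_or_pos n with hn | hn
    · subst hn
      simp only [Function.iterate_succ, Function.iterate_zero, Function.comp, id_eq]
      rw [show f z = (2 : ℂ) ^ (-(mval z.im + 1)) * hmap ((2 : ℂ) ^ (mval z.im) * z) from
        if_neg (not_le.2 him0), mval_eq m z.im hz.1 hz.2]
      congr 2
      push_cast
      ring
    · rw [Function.iterate_succ_apply', ih hn]
      set k : ℤ := (n : ℤ) + m with hk
      set u := hmap^[n] ((2 : ℂ) ^ m * z) with hu
      have him : ((2:ℂ)^(-k) * u).im = (2:ℝ)^(-k + m) * z.im := by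
        rw [im_mul2, hu, hmap_iter_im, im_mul2, ← mul_assoc, ← zpow_add₀ (two_ne_zero)]
      have hlb : (2:ℝ)^(-(k+1)) < ((2:ℂ)^(-k) * u).im := by
        rw [him]
        calc (2:ℝ)^(-(k+1)) = (2:ℝ)^(-k+m) * (2:ℝ)^(-(m+1)) := by
              rw [← zpow_add₀ (two_ne_zero)]; ring_nf
        _ < (2:ℝ)^(-k+m) * z.im := by
              apply mul_lt_mul_of_pos_left hz.1 (by positivity)
      have hub : ((2:ℂ)^(-k) * u).im ≤ (2:ℝ)^(-k) := by
        rw [him]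
        calc (2:ℝ)^(-k+m) * z.im ≤ (2:ℝ)^(-k+m) * (2:ℝ)^(-m) := by
              apply mul_le_mul_of_nonneg_left hz.2 (by positivity)
        _ = (2:ℝ)^(-k) := by rw [← zpow_add₀ (two_ne_zero)]; ring_nf
      have him0' : ¬ ((2:ℂ)^(-k) * u).im ≤ 0 := not_le.2 (lt_trans (by positivity) hlb)
      rw [show f ((2:ℂ)^(-k) * u) = (2 : ℂ) ^ (-(mval ((2:ℂ)^(-k) * u).im + 1)) *
            hmap ((2 : ℂ) ^ (mval ((2:ℂ)^(-k) * u).im) * ((2:ℂ)^(-k) * u)) from if_neg him0',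
          mval_eq k _ hlb hub]
      rw [← mul_assoc, ← zpow_add₀ (two_ne_zero : (2:ℂ) ≠ 0), add_neg_cancel, zpow_zero, one_mul]
      rw [Function.iterate_succ_apply', ← hu]
      congr 2
      push_cast [hk]
      ring
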